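/- In the split case: let G = GL_4(k) × GL_2(k) act on V = Λ²(k⁴) ⊕ Λ²(k⁴) by (g₁,g₂)·(x₁,x₂) = (g₁(a x₁+b x₂)g₁ᵀ, g₁(c x₁+d x₂)g₁ᵀ) with g₂ = [[a,b],[c,d]], where elements of Λ²(k⁴) are alternating 4×4 matrices. Define F_x(v₁,v₂) = pf(x₁v₁ + x₂v₂) (a binary quadratic form) and P(x) = disc(F_x). Then P(g·x) = (det(g₁)·det(g₂))²·P(x) for all g ∈ G and x ∈ V. -/

import Mathlib

open Matrix

/-- The Pfaffian of a 4×4 alternating matrix. -/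
def pf4 {k : Type*} [CommRing k] (A : Matrix (Fin 4) (Fin 4) k) : k :=
  A 0 1 * A 2 3 - A 0 2 * A 1 3 + A 0 3 * A 1 2

lemma det4' {k : Type*} [CommRing k] (g : Matrix (Fin 4) (Fin 4) k) :
    g.det =
      g 0 0 * g 1 1 * g 2 2 * g 3 3 - g 0 0 * g 1 1 * g 2 3 * g 3 2
      - g 0 0 * g 1 2 * g 2 1 * g 3 3 + g 0 0 * g 1 2 * g 2 3 * g 3 1
      + g 0 0 * g 1 3 * g 2 1 * g 3 2 - g 0 0 * g 1 3 * g 2 2 * g 3 1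
      - g 0 1 * g 1 0 * g 2 2 * g 3 3 + g 0 1 * g 1 0 * g 2 3 * g 3 2
      + g 0 1 * g 1 2 * g 2 0 * g 3 3 - g 0 1 * g 1 2 * g 2 3 * g 3 0
      - g 0 1 * g 1 3 * g 2 0 * g 3 2 + g 0 1 * g 1 3 * g 2 2 * g 3 0
      + g 0 2 * g 1 0 * g 2 1 * g 3 3 - g 0 2 * g 1 0 * g 2 3 * g 3 1
      - g 0 2 * g 1 1 * g 2 0 * g 3 3 + g 0 2 * g 1 1 * g 2 3 * g 3 0
      + g 0 2 * g 1 3 * g 2 0 * g 3 1 - g 0 2 * g 1 3 * g 2 1 * g 3 0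
      - g 0 3 * g 1 0 * g 2 1 * g 3 2 + g 0 3 * g 1 0 * g 2 2 * g 3 1
      + g 0 3 * g 1 1 * g 2 0 * g 3 2 - g 0 3 * g 1 1 * g 2 2 * g 3 0
      - g 0 3 * g 1 2 * g 2 0 * g 3 1 + g 0 3 * g 1 2 * g 2 1 * g 3 0 := by
  have e1 : (Fin.succ 2 : Fin 4) = 3 := rfl
  have e2 : (Fin.castSucc 2 : Fin 4) = 2 := rfl
  simp [Matrix.det_succ_row_zero, Fin.sum_univ_succ, Fin.succAbove, e1, e2]
  ring

lemma pf_conj' {k : Type*} [CommRing k] (A g : Matrix (Fin 4) (Fin 4) k)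
    (hA : Aᵀ = -A) (h0 : ∀ i, A i i = 0) :
    pf4 (g * A * gᵀ) = g.det * pf4 A := by
  have h : ∀ i j, A j i = -A i j := fun i j => by
    have := congrFun (congrFun hA i) j
    simpa [Matrix.transpose_apply] using this
  rw [det4']
  simp only [pf4, Matrix.mul_apply, Matrix.transpose_apply, Fin.sum_univ_four,
    h 0 1, h 0 2, h 0 3, h 1 2, h 1 3, h 2 3, h0]
  ring

/-- Split case: `G = GL₄(k) × GL₂(k)` acts on pairs of alternating 4×4
matrices by `(g₁,g₂)·(x₁,x₂) = (g₁(ax₁+bx₂)g₁ᵀ, g₁(cx₁+dx₂)g₁ᵀ)` with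
`g₂ = [[a,b],[c,d]]`.  With `F_x(v₁,v₂) = pf(x₁v₁+x₂v₂)` and
`P(x) = disc F_x`, one has `P(g·x) = (det g₁ · det g₂)² · P(x)`. -/
theorem stmt_16 {k : Type*} [Field k]
    (x₁ x₂ : Matrix (Fin 4) (Fin 4) k)
    (hx₁ : x₁ᵀ = -x₁) (hd₁ : ∀ i, x₁ i i = 0)
    (hx₂ : x₂ᵀ = -x₂) (hd₂ : ∀ i, x₂ i i = 0)
    (g₁ : Matrix (Fin 4) (Fin 4) k) (hg₁ : IsUnit g₁.det)
    (a b c d : k) (hg₂ : a * d - b * c ≠ 0)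
    (y₁ y₂ : Matrix (Fin 4) (Fin 4) k)
    (hy₁ : y₁ = g₁ * (a • x₁ + b • x₂) * g₁ᵀ)
    (hy₂ : y₂ = g₁ * (c • x₁ + d • x₂) * g₁ᵀ)
    (disc : Matrix (Fin 4) (Fin 4) k → Matrix (Fin 4) (Fin 4) k → k)
    (hdisc : ∀ z₁ z₂ : Matrix (Fin 4) (Fin 4) k,
      disc z₁ z₂ = (pf4 (z₁ + z₂) - pf4 z₁ - pf4 z₂) ^ 2 - 4 * pf4 z₁ * pf4 z₂) :
    disc y₁ y₂ = (g₁.det * (a * d - b * c)) ^ 2 * disc x₁ x₂ := by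
  -- alternation facts for linear combinations
  have alt : ∀ (s t : k), (s • x₁ + t • x₂)ᵀ = -(s • x₁ + t • x₂) := by
    intro s t
    simp [Matrix.transpose_add, Matrix.transpose_smul, hx₁, hx₂, smul_neg]
    abel
  have diag : ∀ (s t : k) i, (s • x₁ + t • x₂) i i = 0 := by
    intro s t i
    simp [Matrix.add_apply, Matrix.smul_apply, hd₁, hd₂]
  have hsum : y₁ + y₂ = g₁ * ((a + c) • x₁ + (b + d) • x₂) * g₁ᵀ := by
    rw [hy₁, hy₂, ← Matrix.add_mul, ← Matrix.mul_add]
    congr 1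
    congr 1
    module
  have p1 : pf4 y₁ = g₁.det * pf4 (a • x₁ + b • x₂) := by
    rw [hy₁]; exact pf_conj' _ _ (alt a b) (diag a b)
  have p2 : pf4 y₂ = g₁.det * pf4 (c • x₁ + d • x₂) := by
    rw [hy₂]; exact pf_conj' _ _ (alt c d) (diag c d)
  have p3 : pf4 (y₁ + y₂) = g₁.det * pf4 ((a + c) • x₁ + (b + d) • x₂) := by
    rw [hsum]; exact pf_conj' _ _ (alt _ _) (diag _ _)
  rw [hdisc, hdisc, p1, p2, p3]
  -- now everything is polynomial in entries
  simp only [pf4, Matrix.add_apply, Matrix.smul_apply, smul_eq_mul]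
  ring
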